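/- Fix ν ∈ [0,1), α > 0, ρ ∈ (0,1) and J ∈ ℤ_{>0}. For every T > 0 there exist constants C < ∞ and ε₀ ∈ (0,1] such that for every ε ∈ (0,ε₀], every t ∈ ℕ with t ≤ ε^{−3}T, and every n ∈ ℕ, the t-fold convolution P_ε^t of the time-inhomogeneous tilted step distributions satisfies P_ε^t(n) ≤ C ε^{−1/2} (t+1)^{−1/2}. -/

import Mathlib

/-- The step distribution with parameters `(q, ᾱ, ν)`:
`p(0) = 1 − ᾱ(1−q)/(1+ᾱ)` and
`p(n) = (ᾱ(1−q)(1−ν)/(1+ᾱ)²)·((ν+ᾱ)/(1+ᾱ))^{n−1}` for `n ≥ 1`. -/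
noncomputable def stepDist (q a ν : ℝ) : ℕ → ℝ := fun n =>
  if n = 0 then 1 - a * (1 - q) / (1 + a)
  else (a * (1 - q) * (1 - ν) / (1 + a) ^ 2) * ((ν + a) / (1 + a)) ^ (n - 1)

/-- The tilted step distribution with parameters `(q, ᾱ, ν, ρ)`:
`f(n) = λ ρ^n p(n)` where `γ = (1−ρ)/(1−νρ)` and `λ = (1+ᾱγ)/(1+qᾱγ)`. -/
noncomputable def tiltedStepDist (q a ν ρ : ℝ) : ℕ → ℝ := fun n =>
  ((1 + a * ((1 - ρ) / (1 - ν * ρ))) / (1 + q * a * ((1 - ρ) / (1 - ν * ρ)))) *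
    ρ ^ n * stepDist q a ν n

/-- Convolution of two mass functions on `ℕ`: `(g*h)(n) = ∑_{m=0}^{n} g(m) h(n−m)`. -/
noncomputable def pmfConv (g h : ℕ → ℝ) : ℕ → ℝ := fun n =>
  ∑ m ∈ Finset.range (n + 1), g m * h (n - m)

/-- The `t`-fold convolution `P_ε^t = f_ε^{(0)} * ⋯ * f_ε^{(t−1)}` of the
time-inhomogeneous tilted step distributions, where `f_ε^{(s)}` is the tilted step
distribution with parameters `(e^{−ε}, α e^{−ε·(s mod J)}, ν, ρ)`. -/
noncomputable def tiltedConvIter (ν α ρ ε : ℝ) (J : ℕ) : ℕ → ℕ → ℝ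
  | 0 => fun n => if n = 0 then 1 else 0
  | t + 1 => pmfConv (tiltedConvIter ν α ρ ε J t)
      (tiltedStepDist (Real.exp (-ε)) (α * Real.exp (-ε * ((t % J : ℕ) : ℝ))) ν ρ)

/-! Every tilted step distribution puts mass at least `β / 2` on both `0` and `1`, where
`β ≍ ε`, so its generating function splits as `(β / 2)(1 + X) + G` with `G ≥ 0` of mass at most
`1 - β`. Expanding the product of `t` such factors, `P_ε^t` becomes a mixture, over `k ~ Bin(t, β)`,
of the fair binomial law `Bin(k, 1/2)` convolved with sub-probability measures. The largest atom
of `Bin(k, 1/2)` is at most `√(2 / (k + 1))`, and by Jensen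
`E √(2 / (K + 1)) ≤ √(E [2 / (K + 1)]) ≤ √(2 / (β (t + 1)))`. -/

open Finset PowerSeries

def MassLE (f : ℝ⟦X⟧) (c : ℝ) : Prop :=
  (∀ n, 0 ≤ coeff n f) ∧ ∀ N, ∑ n ∈ range N, coeff n f ≤ c

namespace MassLE

variable {f g : ℝ⟦X⟧} {c d : ℝ}

lemma bound_nonneg (hf : MassLE f c) : 0 ≤ c := by
  simpa using hf.2 0

lemma of_forall_ge (h₀ : ∀ n, 0 ≤ coeff n f) (N₀ : ℕ)
    (h : ∀ N, N₀ ≤ N → ∑ n ∈ range N, coeff n f ≤ c) : MassLE f c := by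
  refine ⟨h₀, fun N => le_trans ?_ (h (max N N₀) (le_max_right _ _))⟩
  exact sum_le_sum_of_subset_of_nonneg (range_subset_range.2 (le_max_left _ _))
    fun n _ _ => h₀ n

lemma one : MassLE 1 1 := by
  refine of_forall_ge (fun n => ?_) 1 fun N hN => ?_
  · rw [coeff_one]; split_ifs <;> norm_num
  · simp [coeff_one, sum_ite_eq', mem_range.2 hN]

lemma mul (hf : MassLE f c) (hg : MassLE g d) : MassLE (f * g) (c * d) := by
  refine ⟨fun n => ?_, fun N => ?_⟩
  · rw [coeff_mul]
    exact sum_nonneg fun p _ => mul_nonneg (hf.1 _) (hg.1 _)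
  · simp_rw [coeff_mul, Nat.sum_antidiagonal_eq_sum_range_succ fun i j => coeff i f * coeff j g]
    rw [sum_range_diag_flip N fun i j => coeff i f * coeff j g]
    calc ∑ i ∈ range N, ∑ j ∈ range (N - i), coeff i f * coeff j g
        ≤ ∑ i ∈ range N, coeff i f * d := by
          refine sum_le_sum fun i _ => ?_
          rw [← mul_sum]
          exact mul_le_mul_of_nonneg_left (hg.2 _) (hf.1 i)
      _ ≤ c * d := by
          rw [← sum_mul]
          exact mul_le_mul_of_nonneg_right (hf.2 N) hg.bound_nonneg

lemma prod {ι : Type*} {s : Finset ι} {G : ι → ℝ⟦X⟧} (h : ∀ i ∈ s, MassLE (G i) c) :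
    MassLE (∏ i ∈ s, G i) (c ^ #s) := by
  classical
  induction s using Finset.induction_on with
  | empty => simpa using one
  | insert i s hi ih =>
    rw [prod_insert hi, card_insert_of_notMem hi, pow_succ']
    exact (h i (mem_insert_self i s)).mul (ih fun j hj => h j (mem_insert_of_mem hj))

end MassLE

lemma coeff_mul_le_of_massLE {f g : ℝ⟦X⟧} {M c : ℝ} (hM : 0 ≤ M) (hf : ∀ m, coeff m f ≤ M)
    (hg : MassLE g c) (n : ℕ) : coeff n (f * g) ≤ M * c := by
  rw [mul_comm, coeff_mul, Nat.sum_antidiagonal_eq_sum_range_succ fun i j => coeff i g * coeff j f]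
  calc ∑ i ∈ range (n + 1), coeff i g * coeff (n - i) f ≤ ∑ i ∈ range (n + 1), coeff i g * M :=
        sum_le_sum fun i _ => mul_le_mul_of_nonneg_left (hf _) (hg.1 i)
    _ ≤ M * c := by
        rw [← sum_mul, mul_comm]
        exact mul_le_mul_of_nonneg_left (hg.2 _) hM

lemma massLE_mk_sub_of_hasSum {f : ℕ → ℝ} {β : ℝ} (hf : ∀ n, 0 ≤ f n) (hsum : HasSum f 1)
    (h₀ : β / 2 ≤ f 0) (h₁ : β / 2 ≤ f 1) : MassLE (mk f - C (β / 2) * (1 + X)) (1 - β) := by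
  have hcoeff : ∀ n, coeff n (mk f - C (β / 2) * (1 + X)) =
      f n - β / 2 * ((if n = 0 then 1 else 0) + if n = 1 then 1 else 0) := by
    intro n
    simp only [map_sub, coeff_mk, coeff_C_mul, map_add, coeff_one, coeff_X]
  refine MassLE.of_forall_ge (fun n => ?_) 2 fun N hN => ?_
  · rw [hcoeff]
    rcases n with _ | _ | n
    · simpa using h₀
    · simpa using h₁
    · simpa using hf (n + 2)
  · rw [sum_congr rfl fun n _ => hcoeff n, sum_sub_distrib, ← mul_sum, sum_add_distrib,
      sum_ite_eq', sum_ite_eq', if_pos (mem_range.2 (by omega)), if_pos (mem_range.2 hN)]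
    linarith [sum_le_hasSum (range N) (fun i _ => hf i) hsum]

lemma coeff_one_add_X_pow (k n : ℕ) : coeff n ((1 + X : ℝ⟦X⟧) ^ k) = k.choose n := by
  rw [← Polynomial.coe_X, ← Polynomial.coe_one, ← Polynomial.coe_add, ← Polynomial.coe_pow,
    Polynomial.coeff_coe, Polynomial.coeff_one_add_X_pow]

lemma Nat.centralBinom_sq_mul_succ_le (j : ℕ) : j.centralBinom ^ 2 * (j + 1) ≤ 16 ^ j := by
  induction j with
  | zero => simp
  | succ j ih =>
    have hpoly : 4 * (2 * j + 1) ^ 2 * (j + 2) ≤ 16 * (j + 1) ^ 3 := by ring_nf; omega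
    refine Nat.le_of_mul_le_mul_right ?_ (pow_pos j.succ_pos 2)
    calc (j + 1).centralBinom ^ 2 * (j + 1 + 1) * (j + 1) ^ 2
        = ((j + 1) * (j + 1).centralBinom) ^ 2 * (j + 2) := by ring
      _ = 4 * (2 * j + 1) ^ 2 * (j + 2) * j.centralBinom ^ 2 := by
          rw [Nat.succ_mul_centralBinom_succ]; ring
      _ ≤ 16 * (j + 1) ^ 3 * j.centralBinom ^ 2 := Nat.mul_le_mul_right _ hpoly
      _ = 16 * (j + 1) ^ 2 * (j.centralBinom ^ 2 * (j + 1)) := by ring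
      _ ≤ 16 * (j + 1) ^ 2 * 16 ^ j := Nat.mul_le_mul_left _ ih
      _ = 16 ^ (j + 1) * (j + 1) ^ 2 := by ring

lemma Nat.choose_sq_mul_succ_le (k n : ℕ) : k.choose n ^ 2 * (k + 1) ≤ 2 * 4 ^ k := by
  have hmid : k.choose n ^ 2 * (k + 1) ≤ k.choose (k / 2) ^ 2 * (k + 1) := by
    gcongr; exact Nat.choose_le_middle n k
  refine hmid.trans ?_
  obtain ⟨j, rfl | rfl⟩ := Nat.even_or_odd' k
  · have h := j.centralBinom_sq_mul_succ_le
    rw [show 2 * j / 2 = j by omega, ← Nat.centralBinom_eq_two_mul_choose,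
      pow_mul, show 4 ^ 2 = 16 by rfl]
    nlinarith
  · have h := (j + 1).centralBinom_sq_mul_succ_le
    rw [Nat.centralBinom_eq_two_mul_choose, show 2 * (j + 1) = 2 * j + 1 + 1 by ring,
      Nat.choose_succ_succ', Nat.choose_symm_half, pow_succ 16] at h
    rw [show (2 * j + 1) / 2 = j by omega, pow_succ 4, pow_mul, show 4 ^ 2 = 16 by rfl]
    nlinarith

lemma Nat.choose_le_two_pow_mul_sqrt (k n : ℕ) :
    (k.choose n : ℝ) ≤ 2 ^ k * √(2 / (k + 1)) := by
  rw [← Real.sqrt_sq (by positivity : (0 : ℝ) ≤ 2 ^ k), ← Real.sqrt_mul (by positivity)]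
  refine Real.le_sqrt_of_sq_le ?_
  rw [mul_div_assoc', le_div_iff₀ (by positivity), ← pow_mul, mul_comm k 2, pow_mul,
    show (2 : ℝ) ^ 2 = 4 by norm_num, mul_comm _ (2 : ℝ)]
  exact_mod_cast k.choose_sq_mul_succ_le n

lemma coeff_prod_le_binomial_sum {ι : Type*} (s : Finset ι) {F : ι → ℝ⟦X⟧} {β : ℝ}
    (hβ : 0 ≤ β) (hF : ∀ i ∈ s, MassLE (F i - C (β / 2) * (1 + X)) (1 - β)) (n : ℕ) :
    coeff n (∏ i ∈ s, F i) ≤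
      ∑ k ∈ range (#s + 1), (#s).choose k * (β ^ k * (1 - β) ^ (#s - k) * √(2 / (k + 1))) := by
  classical
  set G := fun i => F i - C (β / 2) * (1 + X)
  rw [prod_congr rfl fun i _ => (add_sub_cancel (C (β / 2) * (1 + X)) (F i)).symm, prod_add,
    map_sum]
  calc ∑ S ∈ s.powerset, coeff n ((∏ i ∈ S, C (β / 2) * (1 + X)) * ∏ i ∈ s \ S, G i)
      ≤ ∑ S ∈ s.powerset, β ^ #S * (1 - β) ^ (#s - #S) * √(2 / (#S + 1)) := by
        refine sum_le_sum fun S hS => ?_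
        have hmass : MassLE (∏ i ∈ s \ S, G i) ((1 - β) ^ (#s - #S)) := by
          rw [← card_sdiff_of_subset (mem_powerset.1 hS)]
          exact MassLE.prod fun i hi => hF i (mem_sdiff.1 hi).1
        have hbinom := coeff_mul_le_of_massLE (by positivity)
          (fun m => (coeff_one_add_X_pow #S m).trans_le (Nat.choose_le_two_pow_mul_sqrt _ _))
          hmass n
        rw [prod_const, mul_pow, ← map_pow, mul_assoc, coeff_C_mul]
        calc (β / 2) ^ #S * coeff n ((1 + X) ^ #S * ∏ i ∈ s \ S, G i)
            ≤ (β / 2) ^ #S * (2 ^ #S * √(2 / (#S + 1)) * (1 - β) ^ (#s - #S)) :=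
              mul_le_mul_of_nonneg_left hbinom (by positivity)
          _ = β ^ #S * (1 - β) ^ (#s - #S) * √(2 / (#S + 1)) := by
              rw [div_pow]; field_simp
    _ = _ := by
        rw [sum_powerset_apply_card (fun k => β ^ k * (1 - β) ^ (#s - k) * √(2 / (k + 1)))]
        simp only [nsmul_eq_mul]

lemma sum_binomial_mul_two_div_succ_le (t : ℕ) {β : ℝ} (hβ₀ : 0 < β) (hβ₁ : β ≤ 1) :
    ∑ k ∈ range (t + 1), t.choose k * (β ^ k * (1 - β) ^ (t - k)) * (2 / (k + 1)) ≤
      2 / (β * (t + 1)) := by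
  set g : ℕ → ℝ := fun j => β ^ j * (1 - β) ^ (t + 1 - j) * (t + 1).choose j
  have hshift : ∀ k ∈ range (t + 1),
      t.choose k * (β ^ k * (1 - β) ^ (t - k)) * (2 / (k + 1)) = 2 / (β * (t + 1)) * g (k + 1) := by
    intro k _
    have hchoose : ((t + 1 : ℕ) : ℝ) * t.choose k = (t + 1).choose (k + 1) * ((k + 1 : ℕ) : ℝ) := by
      exact_mod_cast Nat.add_one_mul_choose_eq t k
    push_cast at hchoose
    simp only [g, Nat.add_sub_add_right]
    field_simp
    linear_combination β ^ (k + 1) * (1 - β) ^ (t - k) * hchoose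
  have hg₀ : 0 ≤ g 0 := by
    have : 0 ≤ 1 - β := by linarith
    simp only [g]
    positivity
  rw [sum_congr rfl hshift, ← mul_sum]
  refine mul_le_of_le_one_right (by positivity) ?_
  calc ∑ k ∈ range (t + 1), g (k + 1) ≤ ∑ k ∈ range (t + 1), g (k + 1) + g 0 :=
        le_add_of_nonneg_right hg₀
    _ = (β + (1 - β)) ^ (t + 1) := by rw [← sum_range_succ', add_pow]
    _ = 1 := by rw [add_sub_cancel, one_pow]

lemma sum_binomial_mul_sqrt_two_div_succ_le (t : ℕ) {β : ℝ} (hβ₀ : 0 < β) (hβ₁ : β ≤ 1) :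
    ∑ k ∈ range (t + 1), t.choose k * (β ^ k * (1 - β) ^ (t - k) * √(2 / (k + 1))) ≤
      √(2 / (β * (t + 1))) := by
  set w : ℕ → ℝ := fun k => t.choose k * (β ^ k * (1 - β) ^ (t - k))
  have hw₀ : ∀ k ∈ range (t + 1), 0 ≤ w k := fun k _ => by
    have : 0 ≤ 1 - β := by linarith
    positivity
  have hw₁ : ∑ k ∈ range (t + 1), w k = 1 := by
    calc ∑ k ∈ range (t + 1), w k
        = ∑ k ∈ range (t + 1), β ^ k * (1 - β) ^ (t - k) * t.choose k :=
          sum_congr rfl fun k _ => by ring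
      _ = 1 := by rw [← add_pow, add_sub_cancel, one_pow]
  have hjensen := Real.strictConcaveOn_sqrt.concaveOn.le_map_sum hw₀ hw₁
    (p := fun k : ℕ => 2 / ((k : ℝ) + 1)) fun k _ => Set.mem_Ici.2 (by positivity)
  simp only [smul_eq_mul] at hjensen
  calc ∑ k ∈ range (t + 1), t.choose k * (β ^ k * (1 - β) ^ (t - k) * √(2 / (k + 1)))
      = ∑ k ∈ range (t + 1), w k * √(2 / (k + 1)) := sum_congr rfl fun k _ => by ring
    _ ≤ √(∑ k ∈ range (t + 1), w k * (2 / (k + 1))) := hjensen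
    _ ≤ √(2 / (β * (t + 1))) := Real.sqrt_le_sqrt (sum_binomial_mul_two_div_succ_le t hβ₀ hβ₁)

lemma half_mul_le_one_sub_exp_neg {ε : ℝ} (hε₀ : 0 ≤ ε) (hε₁ : ε ≤ 1) :
    ε / 2 ≤ 1 - Real.exp (-ε) := by
  have hexp := Real.add_one_le_exp ε
  have hinv : Real.exp (-ε) * Real.exp ε = 1 := by
    rw [← Real.exp_add, neg_add_cancel, Real.exp_zero]
  nlinarith [Real.exp_pos (-ε), mul_le_mul_of_nonneg_left hexp (Real.exp_pos (-ε)).le]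

section TiltedStep

variable {q a ν ρ : ℝ}

lemma stepDist_zero_ge (hq₁ : q ≤ 1) (ha : 0 ≤ a) : q ≤ stepDist q a ν 0 := by
  have h : a * (1 - q) / (1 + a) ≤ 1 - q := by
    rw [div_le_iff₀ (by linarith)]; nlinarith
  simp only [stepDist, if_pos]
  linarith

lemma stepDist_nonneg (hq₀ : 0 ≤ q) (hq₁ : q ≤ 1) (ha : 0 ≤ a) (hν₀ : 0 ≤ ν) (hν₁ : ν ≤ 1)
    (n : ℕ) : 0 ≤ stepDist q a ν n := by
  rcases n with _ | n
  · exact hq₀.trans (stepDist_zero_ge hq₁ ha)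
  · have : 0 ≤ 1 - q := by linarith
    have : 0 ≤ 1 - ν := by linarith
    simp only [stepDist, if_neg n.succ_ne_zero]
    positivity

lemma one_le_tiltFactor (γ : ℝ) (hq₀ : 0 ≤ q) (hq₁ : q ≤ 1) (ha : 0 ≤ a) (hγ : 0 ≤ γ) :
    1 ≤ (1 + a * γ) / (1 + q * a * γ) := by
  rw [one_le_div (by positivity)]
  nlinarith [mul_nonneg ha hγ]

lemma pow_mul_stepDist_le_tiltedStepDist (hq₀ : 0 ≤ q) (hq₁ : q ≤ 1) (ha : 0 ≤ a)
    (hν₀ : 0 ≤ ν) (hν₁ : ν < 1) (hρ₀ : 0 ≤ ρ) (hρ₁ : ρ ≤ 1) (n : ℕ) :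
    ρ ^ n * stepDist q a ν n ≤ tiltedStepDist q a ν ρ n := by
  have hγ : 0 ≤ (1 - ρ) / (1 - ν * ρ) :=
    div_nonneg (by linarith) (by nlinarith)
  rw [tiltedStepDist, mul_assoc]
  exact le_mul_of_one_le_left
    (mul_nonneg (pow_nonneg hρ₀ n) (stepDist_nonneg hq₀ hq₁ ha hν₀ hν₁.le n))
    (one_le_tiltFactor _ hq₀ hq₁ ha hγ)

lemma hasSum_tiltedStepDist (hq₀ : 0 ≤ q) (ha : 0 ≤ a) (hν₀ : 0 ≤ ν) (hν₁ : ν < 1)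
    (hρ₀ : 0 ≤ ρ) (hρ₁ : ρ ≤ 1) : HasSum (tiltedStepDist q a ν ρ) 1 := by
  have hr₀ : 0 ≤ (ν + a) / (1 + a) := by positivity
  have hr₁ : (ν + a) / (1 + a) < 1 := by rw [div_lt_one (by linarith)]; linarith
  have hρr : ρ * ((ν + a) / (1 + a)) < 1 := by nlinarith
  obtain ⟨K, hK⟩ : ∃ K, K = (1 + a * ((1 - ρ) / (1 - ν * ρ))) /
      (1 + q * a * ((1 - ρ) / (1 - ν * ρ))) * ρ * (a * (1 - q) * (1 - ν) / (1 + a) ^ 2) :=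
    ⟨_, rfl⟩
  have htail : (fun k => tiltedStepDist q a ν ρ (k + 1)) =
      fun k => K * (ρ * ((ν + a) / (1 + a))) ^ k := by
    funext k
    simp only [tiltedStepDist, stepDist, if_neg k.succ_ne_zero, Nat.add_sub_cancel, hK, mul_pow]
    ring
  have hhead : 1 - ∑ i ∈ range 1, tiltedStepDist q a ν ρ i =
      K * (1 - ρ * ((ν + a) / (1 + a)))⁻¹ := by
    have h1 : 1 - ν * ρ ≠ 0 := by nlinarith
    have h2 : 1 + a ≠ 0 := by linarith
    have h3 : 1 - ν * ρ + a * (1 - ρ) * q ≠ 0 := by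
      nlinarith [mul_nonneg (mul_nonneg ha (by linarith : (0 : ℝ) ≤ 1 - ρ)) hq₀]
    have h4 : 1 - ν * ρ + a * (1 - ρ) ≠ 0 := by
      nlinarith [mul_nonneg ha (by linarith : (0 : ℝ) ≤ 1 - ρ)]
    have hr : 1 - ρ * ((ν + a) / (1 + a)) = (1 - ν * ρ + a * (1 - ρ)) / (1 + a) := by
      field_simp; ring
    rw [hr, hK]
    simp only [sum_range_one, tiltedStepDist, stepDist, if_pos, pow_zero, mul_one]
    -- with `D = 1 - νρ` this is `(1 + a)(D + qa(1 - ρ)) - (D + a(1 - ρ))(1 + qa) = aρ(1 - q)(1 - ν)`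
    generalize hD : 1 - ν * ρ = D at *
    field_simp
    linear_combination (-(a * (1 - q))) * hD
  refine (hasSum_nat_add_iff' 1).mp ?_
  rw [htail, hhead]
  exact (hasSum_geometric_of_lt_one (by positivity) hρr).mul_left K

lemma tiltedStepDist_zero_ge (hq₀ : 0 ≤ q) (hq₁ : q ≤ 1) (ha : 0 ≤ a) (hν₀ : 0 ≤ ν)
    (hν₁ : ν < 1) (hρ₀ : 0 ≤ ρ) (hρ₁ : ρ ≤ 1) : q ≤ tiltedStepDist q a ν ρ 0 := by
  have h := pow_mul_stepDist_le_tiltedStepDist hq₀ hq₁ ha hν₀ hν₁ hρ₀ hρ₁ 0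
  rw [pow_zero, one_mul] at h
  exact (stepDist_zero_ge hq₁ ha).trans h

lemma tiltedStepDist_one_ge (hq₀ : 0 ≤ q) (hq₁ : q ≤ 1) (ha : 0 ≤ a) (hν₀ : 0 ≤ ν)
    (hν₁ : ν < 1) (hρ₀ : 0 ≤ ρ) (hρ₁ : ρ ≤ 1) :
    ρ * (a * (1 - q) * (1 - ν) / (1 + a) ^ 2) ≤ tiltedStepDist q a ν ρ 1 := by
  simpa [stepDist] using pow_mul_stepDist_le_tiltedStepDist hq₀ hq₁ ha hν₀ hν₁ hρ₀ hρ₁ 1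

section

variable {ε a₀ A : ℝ} (hε₀ : 0 ≤ ε) (hε₁ : ε ≤ 1) (ha₀ : 0 ≤ a₀) (ha₀a : a₀ ≤ a) (haA : a ≤ A)
  (hν₀ : 0 ≤ ν) (hν₁ : ν < 1) (hρ₀ : 0 ≤ ρ) (hρ₁ : ρ ≤ 1)
include hε₀ hε₁ ha₀ ha₀a haA hν₀ hν₁ hρ₀ hρ₁

lemma mul_le_tiltedStepDist_one :
    ρ * a₀ * (1 - ν) / (1 + A) ^ 2 * (ε / 2) ≤ tiltedStepDist (Real.exp (-ε)) a ν ρ 1 := by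
  have hq := half_mul_le_one_sub_exp_neg hε₀ hε₁
  have hq₁ : Real.exp (-ε) ≤ 1 := Real.exp_le_one_iff.2 (by linarith)
  calc ρ * a₀ * (1 - ν) / (1 + A) ^ 2 * (ε / 2)
      = ρ * (a₀ * (ε / 2) * (1 - ν) / (1 + A) ^ 2) := by ring
    _ ≤ ρ * (a * (1 - Real.exp (-ε)) * (1 - ν) / (1 + a) ^ 2) := by
        have ha : 0 ≤ a := ha₀.trans ha₀a
        have h1q : 0 ≤ 1 - Real.exp (-ε) := by linarith
        have h1ν : 0 ≤ 1 - ν := by linarith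
        gcongr
    _ ≤ tiltedStepDist (Real.exp (-ε)) a ν ρ 1 :=
        tiltedStepDist_one_ge (Real.exp_pos _).le hq₁ (ha₀.trans ha₀a) hν₀ hν₁ hρ₀ hρ₁

lemma massLE_mk_tiltedStepDist_sub {β : ℝ} (hβ : β ≤ 1 / 2)
    (hβε : β ≤ ρ * a₀ * (1 - ν) / (1 + A) ^ 2 * ε) :
    MassLE (mk (tiltedStepDist (Real.exp (-ε)) a ν ρ) - C (β / 2) * (1 + X)) (1 - β) := by
  have hq₀ := (Real.exp_pos (-ε)).le
  have hq₁ : Real.exp (-ε) ≤ 1 := Real.exp_le_one_iff.2 (by linarith)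
  have ha : 0 ≤ a := ha₀.trans ha₀a
  refine massLE_mk_sub_of_hasSum (fun n => ?_) (hasSum_tiltedStepDist hq₀ ha hν₀ hν₁ hρ₀ hρ₁)
    ?_ ?_
  · exact (mul_nonneg (pow_nonneg hρ₀ n) (stepDist_nonneg hq₀ hq₁ ha hν₀ hν₁.le n)).trans
      (pow_mul_stepDist_le_tiltedStepDist hq₀ hq₁ ha hν₀ hν₁ hρ₀ hρ₁ n)
  · have hexp : (1 : ℝ) / 4 ≤ Real.exp (-ε) :=
      le_trans (by norm_num) (Real.exp_neg_one_gt_d9.le.trans (Real.exp_le_exp.2 (by linarith)))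
    linarith [tiltedStepDist_zero_ge hq₀ hq₁ ha hν₀ hν₁ hρ₀ hρ₁]
  · linarith [mul_le_tiltedStepDist_one hε₀ hε₁ ha₀ ha₀a haA hν₀ hν₁ hρ₀ hρ₁]

end

end TiltedStep

lemma mk_tiltedConvIter (ν α ρ ε : ℝ) (J t : ℕ) :
    mk (tiltedConvIter ν α ρ ε J t) = ∏ s ∈ range t,
      mk (tiltedStepDist (Real.exp (-ε)) (α * Real.exp (-ε * ((s % J : ℕ) : ℝ))) ν ρ) := by
  induction t with
  | zero =>
    ext n
    simp [tiltedConvIter, coeff_one]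
  | succ t ih =>
    rw [prod_range_succ, ← ih]
    ext n
    rw [tiltedConvIter, coeff_mk, coeff_mul, Nat.sum_antidiagonal_eq_sum_range_succ_mk]
    simp [pmfConv]

lemma exp_neg_le_exp_neg_mul_mod {ε : ℝ} (hε₀ : 0 ≤ ε) (hε₁ : ε ≤ 1) {J : ℕ} (hJ : 0 < J)
    (s : ℕ) : Real.exp (-J) ≤ Real.exp (-ε * ((s % J : ℕ) : ℝ)) ∧
      Real.exp (-ε * ((s % J : ℕ) : ℝ)) ≤ 1 := by
  have hmod : ((s % J : ℕ) : ℝ) ≤ J := by exact_mod_cast (Nat.mod_lt s hJ).le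
  have hmod₀ : (0 : ℝ) ≤ (s % J : ℕ) := Nat.cast_nonneg _
  constructor
  · exact Real.exp_le_exp.2 (by nlinarith)
  · exact Real.exp_le_one_iff.2 (by nlinarith)

lemma sqrt_two_div_eq_rpow {c ε x : ℝ} (hc : 0 < c) (hε : 0 < ε) (hx : 0 < x) :
    √(2 / (c * ε * x)) = (c / 2) ^ (-(1 : ℝ) / 2) * ε ^ (-(1 : ℝ) / 2) * x ^ (-(1 : ℝ) / 2) := by
  rw [show 2 / (c * ε * x) = (c / 2 * ε * x)⁻¹ by field_simp, Real.sqrt_eq_rpow,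
    Real.inv_rpow (by positivity), ← Real.rpow_neg (by positivity), Real.mul_rpow (by positivity)
    hx.le, Real.mul_rpow (by positivity) hε.le]
  norm_num

theorem tiltedConvIter_sup_bound_general (ν α ρ : ℝ) (J : ℕ)
    (hν0 : 0 ≤ ν) (hν1 : ν < 1) (hα : 0 < α) (hρ0 : 0 < ρ) (hρ1 : ρ < 1) (hJ : 0 < J)
    (T : ℝ) :
    ∃ C : ℝ, ∃ ε₀ : ℝ, ε₀ ∈ Set.Ioc (0 : ℝ) 1 ∧
      ∀ ε ∈ Set.Ioc (0 : ℝ) ε₀, ∀ t : ℕ, (t : ℝ) ≤ T / ε ^ 3 → ∀ n : ℕ,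
        tiltedConvIter ν α ρ ε J t n ≤
          C * ε ^ (-(1 : ℝ) / 2) * ((t : ℝ) + 1) ^ (-(1 : ℝ) / 2) := by
  set κ := ρ * (α * Real.exp (-J)) * (1 - ν) / (1 + α) ^ 2
  set c := min (1 / 2) κ
  have h1ν : 0 < 1 - ν := by linarith
  have hc : 0 < c := lt_min (by norm_num) (by positivity)
  refine ⟨(c / 2) ^ (-(1 : ℝ) / 2), 1, ⟨one_pos, le_rfl⟩, ?_⟩
  rintro ε ⟨hε₀, hε₁⟩ t - n
  have hcε : c * ε ≤ 1 / 2 := (mul_le_of_le_one_right hc.le hε₁).trans (min_le_left _ _)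
  have hstep : ∀ s ∈ range t, MassLE (mk (tiltedStepDist (Real.exp (-ε))
      (α * Real.exp (-ε * ((s % J : ℕ) : ℝ))) ν ρ) - C (c * ε / 2) * (1 + X)) (1 - c * ε) := by
    intro s _
    obtain ⟨hlow, hup⟩ := exp_neg_le_exp_neg_mul_mod hε₀.le hε₁ hJ s
    exact massLE_mk_tiltedStepDist_sub hε₀.le hε₁ (by positivity)
      (mul_le_mul_of_nonneg_left hlow hα.le) (mul_le_of_le_one_right hα.le hup) hν0 hν1 hρ0.le
      hρ1.le hcε (mul_le_mul_of_nonneg_right (min_le_right _ _) hε₀.le)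
  calc tiltedConvIter ν α ρ ε J t n
      = coeff n (∏ s ∈ range t, mk (tiltedStepDist (Real.exp (-ε))
          (α * Real.exp (-ε * ((s % J : ℕ) : ℝ))) ν ρ)) := by
        rw [← mk_tiltedConvIter, coeff_mk]
    _ ≤ ∑ k ∈ range (t + 1), t.choose k *
          ((c * ε) ^ k * (1 - c * ε) ^ (t - k) * √(2 / (k + 1))) := by
        simpa using coeff_prod_le_binomial_sum (range t) (by positivity) hstep n
    _ ≤ √(2 / (c * ε * (t + 1))) :=
        sum_binomial_mul_sqrt_two_div_succ_le t (by positivity) (by linarith)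
    _ = (c / 2) ^ (-(1 : ℝ) / 2) * ε ^ (-(1 : ℝ) / 2) * ((t : ℝ) + 1) ^ (-(1 : ℝ) / 2) :=
        sqrt_two_div_eq_rpow hc hε₀ (by positivity)

/-- For every `T > 0` there are `C < ∞` and `ε₀ ∈ (0,1]` such that for all
`ε ∈ (0,ε₀]`, `t ≤ ε^{−3}T` and `n ∈ ℕ`, the `t`-fold convolution satisfies
`P_ε^t(n) ≤ C ε^{−1/2} (t+1)^{−1/2}`. -/
theorem tiltedConvIter_sup_bound (ν α ρ : ℝ) (J : ℕ)
    (hν0 : 0 ≤ ν) (hν1 : ν < 1) (hα : 0 < α) (hρ0 : 0 < ρ) (hρ1 : ρ < 1) (hJ : 0 < J)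
    (T : ℝ) (hT : 0 < T) :
    ∃ C : ℝ, ∃ ε₀ : ℝ, ε₀ ∈ Set.Ioc (0 : ℝ) 1 ∧
      ∀ ε ∈ Set.Ioc (0 : ℝ) ε₀, ∀ t : ℕ, (t : ℝ) ≤ T / ε ^ 3 → ∀ n : ℕ,
        tiltedConvIter ν α ρ ε J t n ≤
          C * ε ^ (-(1 : ℝ) / 2) * ((t : ℝ) + 1) ^ (-(1 : ℝ) / 2) :=
  tiltedConvIter_sup_bound_general ν α ρ J hν0 hν1 hα hρ0 hρ1 hJ T
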